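/- Let d ≥ 2 and let R = {v ∈ ℤ^{d+1} : v₁ + ⋯ + v_{d+1} = 0 and v₁² + ⋯ + v_{d+1}² = 2} be the set of roots of the root lattice A_d. Then the maximum cardinality of a subset of R whose elements are pairwise orthogonal is ⌊(d+1)/2⌋; in particular, R contains no d pairwise orthogonal vectors, so the roots of A_d contain no 2-frame. -/

import Mathlib

/-!
Every root is `e a - e b` with `a ≠ b`, and `(e a - e b) ⬝ᵥ (e c - e e') = 0` forces
`{a, b}` and `{c, e'}` to be disjoint. Hence `k` pairwise orthogonal roots have pairwise disjoint
two-element supports, so `2 k ≤ d + 1`; the roots `e 0 - e 1, e 2 - e 3, …` attain the bound.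
-/

open Finset Matrix

namespace TypeARoot

lemma eq_single_sub_single_of_apply {ι : Type*} [DecidableEq ι] {v : ι → ℤ} {a b : ι}
    (hab : a ≠ b) (ha : v a = 1) (hb : v b = -1) (hoff : ∀ i, i ≠ a → i ≠ b → v i = 0) :
    v = Pi.single a 1 - Pi.single b 1 := by
  funext i
  by_cases hia : i = a
  · subst hia; simp [ha, hab]
  by_cases hib : i = b
  · subst hib; simp [hia, hb]
  simp [hia, hib, hoff i hia hib]

variable {ι : Type*} [Fintype ι]

-- For `Fintype.card ι = d + 1` these are the roots of `A_d`.
def IsRoot (v : ι → ℤ) : Prop :=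
  ∑ i, v i = 0 ∧ ∑ i, v i ^ 2 = 2

variable [DecidableEq ι]

lemma support_single_sub_single {a b : ι} (hab : a ≠ b) :
    univ.filter (fun i => (Pi.single a 1 - Pi.single b 1 : ι → ℤ) i ≠ 0) = {a, b} := by
  ext i
  by_cases hia : i = a
  · subst hia; simp [hab]
  by_cases hib : i = b
  · subst hib; simp [hia]
  simp [hia, hib]

lemma disjoint_of_single_sub_single_dotProduct_eq_zero {a b c e : ι} (hab : a ≠ b)
    (hce : c ≠ e)
    (h : (Pi.single a 1 - Pi.single b 1 : ι → ℤ) ⬝ᵥ (Pi.single c 1 - Pi.single e 1) = 0) :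
    Disjoint ({a, b} : Finset ι) {c, e} := by
  simp only [sub_dotProduct, single_dotProduct, Pi.sub_apply, Pi.single_apply] at h
  simp only [disjoint_insert_left, disjoint_singleton_left, mem_insert, mem_singleton]
  split_ifs at h <;> grind

lemma isRoot_single_sub_single {a b : ι} (hab : a ≠ b) :
    IsRoot (Pi.single a 1 - Pi.single b 1 : ι → ℤ) := by
  refine ⟨by simp [sum_sub_distrib], ?_⟩
  calc ∑ i, (Pi.single a 1 - Pi.single b 1 : ι → ℤ) i ^ 2
      = (Pi.single a 1 - Pi.single b 1 : ι → ℤ) ⬝ᵥ (Pi.single a 1 - Pi.single b 1) := by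
        simp only [dotProduct, sq]
    _ = 2 := by simp [hab, hab.symm]

lemma IsRoot.eq_single_sub_single {v : ι → ℤ} (hv : IsRoot v) :
    ∃ a b, a ≠ b ∧ v = Pi.single a 1 - Pi.single b 1 := by
  obtain ⟨hsum, hsq⟩ := hv
  have hbound : ∀ i, -1 ≤ v i ∧ v i ≤ 1 := fun i => by
    have : v i ^ 2 ≤ 2 := hsq ▸ single_le_sum (fun j _ => sq_nonneg (v j)) (mem_univ i)
    constructor <;> nlinarith
  set T := univ.filter (fun i => v i ≠ 0)
  have hT : ∀ i, i ∈ T ↔ v i = 1 ∨ v i = -1 := fun i => by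
    have := hbound i
    simp only [T, mem_filter, mem_univ, true_and]; omega
  have hcard : #T = 2 := by
    have hone : ∀ i ∈ T, v i ^ 2 = 1 := fun i hi => by
      rcases (hT i).1 hi with h | h <;> simp [h]
    have : ∑ i ∈ T, v i ^ 2 = 2 :=
      hsq ▸ sum_filter_of_ne fun i _ h => by simpa using h
    rw [sum_congr rfl hone, sum_const, nsmul_one] at this
    exact_mod_cast this
  obtain ⟨a, b, hab, hTab⟩ := card_eq_two.1 hcard
  have hpair : v a + v b = 0 := by
    rw [← sum_pair hab, ← hTab, ← hsum]
    exact sum_filter_of_ne fun i _ h => h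
  have hoff : ∀ i, i ≠ a → i ≠ b → v i = 0 := fun i hia hib => by
    by_contra h
    have : i ∈ T := by simpa [T] using h
    simp [hTab, hia, hib] at this
  rcases (hT a).1 (by simp [hTab]) with ha | ha
  · exact ⟨a, b, hab, eq_single_sub_single_of_apply hab ha (by omega) hoff⟩
  · exact ⟨b, a, hab.symm, eq_single_sub_single_of_apply hab.symm (by omega) ha
      fun i hib hia => hoff i hia hib⟩

variable {v w : ι → ℤ}

lemma IsRoot.card_support (hv : IsRoot v) : #(univ.filter (v · ≠ 0)) = 2 := by
  obtain ⟨a, b, hab, rfl⟩ := hv.eq_single_sub_single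
  rw [support_single_sub_single hab, card_pair hab]

lemma IsRoot.disjoint_support (hv : IsRoot v) (hw : IsRoot w) (h : v ⬝ᵥ w = 0) :
    Disjoint (univ.filter (v · ≠ 0)) (univ.filter (w · ≠ 0)) := by
  obtain ⟨a, b, hab, rfl⟩ := hv.eq_single_sub_single
  obtain ⟨c, e, hce, rfl⟩ := hw.eq_single_sub_single
  rw [support_single_sub_single hab, support_single_sub_single hce]
  exact disjoint_of_single_sub_single_dotProduct_eq_zero hab hce h

theorem two_mul_card_le_of_pairwise_orthogonal (S : Finset (ι → ℤ))
    (hS : ∀ v ∈ S, IsRoot v) (horth : ∀ v ∈ S, ∀ w ∈ S, v ≠ w → v ⬝ᵥ w = 0) :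
    2 * #S ≤ Fintype.card ι :=
  calc 2 * #S = ∑ v ∈ S, #(univ.filter (v · ≠ 0)) := by
        rw [sum_congr rfl fun v hv => (hS v hv).card_support, sum_const, smul_eq_mul, mul_comm]
    _ = #(S.biUnion fun v => univ.filter (v · ≠ 0)) :=
        (card_biUnion fun v hv w hw hvw =>
          (hS v hv).disjoint_support (hS w hw) (horth v hv w hw hvw)).symm
    _ ≤ Fintype.card ι := card_le_univ _

theorem exists_pairwise_orthogonal_of_embedding {κ : Type*} [Fintype κ] (p : κ ⊕ κ ↪ ι) :
    ∃ S : Finset (ι → ℤ), (∀ v ∈ S, IsRoot v) ∧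
      (∀ v ∈ S, ∀ w ∈ S, v ≠ w → v ⬝ᵥ w = 0) ∧ #S = Fintype.card κ := by
  set f : κ → ι → ℤ := fun k => Pi.single (p (.inl k)) 1 - Pi.single (p (.inr k)) 1
  have hself : ∀ k, f k ⬝ᵥ f k = 2 := fun k => by simp [f, p.injective.eq_iff]
  have horth : ∀ k l, k ≠ l → f k ⬝ᵥ f l = 0 := fun k l hkl => by
    simp [f, p.injective.eq_iff, Ne.symm hkl]
  have hinj : Function.Injective f := fun k l hkl => by
    by_contra hne
    simpa [hkl, hself] using horth k l hne
  refine ⟨univ.map ⟨f, hinj⟩, ?_, ?_, by simp⟩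
  · simp only [mem_map, mem_univ, true_and, Function.Embedding.coeFn_mk, forall_exists_index,
      forall_apply_eq_imp_iff]
    exact fun k => isRoot_single_sub_single (p.injective.ne Sum.inl_ne_inr)
  · simp only [mem_map, mem_univ, true_and, Function.Embedding.coeFn_mk, forall_exists_index,
      forall_apply_eq_imp_iff]
    exact fun k l hkl => horth k l fun h => hkl (h ▸ rfl)

end TypeARoot

theorem stmt9 (d : ℕ) :
    IsGreatest {n : ℕ | ∃ S : Finset (Fin (d + 1) → ℤ),
      (∀ v ∈ S, (∑ i, v i = 0) ∧ (∑ i, (v i) ^ 2 = 2)) ∧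
      (∀ v ∈ S, ∀ w ∈ S, v ≠ w → ∑ i, v i * w i = 0) ∧
      S.card = n} ((d + 1) / 2) := by
  constructor
  · have hle : (d + 1) / 2 + (d + 1) / 2 ≤ d + 1 := by omega
    obtain ⟨S, hroots, horth, hcard⟩ := TypeARoot.exists_pairwise_orthogonal_of_embedding
      (finSumFinEquiv.toEmbedding.trans (Fin.castLEEmb hle))
    exact ⟨S, hroots, horth, by simpa using hcard⟩
  · rintro n ⟨S, hroots, horth, rfl⟩
    have := TypeARoot.two_mul_card_le_of_pairwise_orthogonal S hroots horth
    rw [Fintype.card_fin] at this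
    omega
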